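/- Let $\beta = 5/4$, let $W \ge 0$, and let $(N_i)_{i=0}^l$, $(N^*_i)_{i=0}^l$ be sequences with $N_0 = N^*_0 = 0$, $0 \le N_i, N^*_i \le W$, satisfying $W - N_i \le \frac{3}{4}(W - N_{i-1}) + \frac{1}{4}(W - N^*_i)$ for all $1 \le i \le l$. If $L^* \ge \frac{\beta-1}{\beta} \sum_{i=0}^l \beta^i (W - N^*_i)$, then $\sum_{i=0}^l \beta^{i+2}(W - N_i) \le c \cdot L^*$ for some universal constant $c$ (e.g., $c = 1000$ suffices). -/

import Mathlib

open Finset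

/-- Sum the recursion weighted by `β ^ (i+1)`: the weighted sum of `a` reappears on the right with
factor `p β`, so for `p β < 1` it can be solved for. -/
theorem one_sub_mul_weighted_sum_le {p β : ℝ} (hβ : 0 ≤ β) (hpβ : 0 ≤ p * β) {a b : ℕ → ℝ}
    {l : ℕ} (hal : 0 ≤ a l) (hrec : ∀ i < l, a (i + 1) ≤ p * a i + (1 - p) * b (i + 1)) :
    (1 - p * β) * ∑ i ∈ range (l + 1), β ^ i * a i ≤
      a 0 + (1 - p) * (∑ i ∈ range (l + 1), β ^ i * b i - b 0) := by
  have hstep : ∀ i ∈ range l, β ^ (i + 1) * a (i + 1) ≤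
      p * β * (β ^ i * a i) + (1 - p) * (β ^ (i + 1) * b (i + 1)) := fun i hi =>
    (mul_le_mul_of_nonneg_left (hrec i (mem_range.mp hi)) (pow_nonneg hβ (i + 1))).trans_eq
      (by ring)
  have hsum := sum_le_sum hstep
  rw [sum_add_distrib, ← mul_sum, ← mul_sum] at hsum
  have hlast : 0 ≤ p * β * (β ^ l * a l) := mul_nonneg hpβ (mul_nonneg (pow_nonneg hβ l) hal)
  have hS := sum_range_succ (fun i => β ^ i * a i) l
  have hS' := sum_range_succ' (fun i => β ^ i * a i) l
  have hT' := sum_range_succ' (fun i => β ^ i * b i) l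
  simp only [pow_zero, one_mul] at hS' hT'
  have hpβS : p * β * ∑ i ∈ range (l + 1), β ^ i * a i =
      p * β * ∑ i ∈ range l, β ^ i * a i + p * β * (β ^ l * a l) := by rw [hS]; ring
  have hpT : (1 - p) * (∑ i ∈ range (l + 1), β ^ i * b i - b 0) =
      (1 - p) * ∑ i ∈ range l, β ^ (i + 1) * b (i + 1) := by rw [hT']; ring
  linarith

theorem stmt_9_general (W L : ℝ) (l : ℕ) (N Ns : ℕ → ℝ)
    (hN0 : N 0 = 0) (hNs0 : Ns 0 = 0)
    (hNb : ∀ i ≤ l, 0 ≤ N i ∧ N i ≤ W)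
    (hNsb : ∀ i ≤ l, 0 ≤ Ns i ∧ Ns i ≤ W)
    (hrec : ∀ i, 1 ≤ i → i ≤ l →
      W - N i ≤ 3 / 4 * (W - N (i - 1)) + 1 / 4 * (W - Ns i))
    (hL : ((5 / 4 : ℝ) - 1) / (5 / 4) *
        (∑ i ∈ Finset.range (l + 1), (5 / 4 : ℝ) ^ i * (W - Ns i)) ≤ L) :
    ∑ i ∈ Finset.range (l + 1), (5 / 4 : ℝ) ^ (i + 2) * (W - N i) ≤ 1000 * L := by
  set T := ∑ i ∈ range (l + 1), (5 / 4 : ℝ) ^ i * (W - Ns i)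
  have key := one_sub_mul_weighted_sum_le (p := 3 / 4) (β := 5 / 4) (a := fun i => W - N i)
    (b := fun i => W - Ns i) (by norm_num) (by norm_num)
    (show 0 ≤ W - N l by linarith [(hNb l le_rfl).2])
    (fun i hi => by
      have h := hrec (i + 1) (by omega) hi
      rw [Nat.add_sub_cancel] at h
      linarith)
  have hW_le_T : W - Ns 0 ≤ T :=
    single_le_sum (f := fun i => (5 / 4 : ℝ) ^ i * (W - Ns i))
      (fun i hi => mul_nonneg (by positivity) (by linarith [(hNsb i (mem_range_succ_iff.mp hi)).2]))
      (mem_range.mpr l.succ_pos) |>.trans_eq' (by simp)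
  have hW_nonneg := (hNsb 0 (Nat.zero_le l)).2
  have hshift : ∑ i ∈ range (l + 1), (5 / 4 : ℝ) ^ (i + 2) * (W - N i) =
      (5 / 4) ^ 2 * ∑ i ∈ range (l + 1), (5 / 4 : ℝ) ^ i * (W - N i) := by
    rw [mul_sum]; exact sum_congr rfl fun i _ => by ring
  simp only [hN0, hNs0, sub_zero] at key hW_le_T hW_nonneg
  norm_num at hL key
  -- With `S := ∑ (5/4)^i (W - N i)`, `key` says `S / 16 ≤ W + (T - W) / 4 ≤ T`,
  -- so the sum is `(5/4)^2 S ≤ 25 T ≤ 125 L`.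
  rw [hshift]
  linarith

/-- Geometric-weighting argument from the latency analysis, with `β = 5/4`:
if `W - N i ≤ (3/4)(W - N (i-1)) + (1/4)(W - N* i)` for `1 ≤ i ≤ l` and
`L* ≥ ((β-1)/β) ∑_{i=0}^l β^i (W - N* i)`, then
`∑_{i=0}^l β^{i+2} (W - N i) ≤ 1000 · L*`. -/
theorem stmt_9 (W L : ℝ) (hW : 0 ≤ W) (l : ℕ) (N Ns : ℕ → ℝ)
    (hN0 : N 0 = 0) (hNs0 : Ns 0 = 0)
    (hNb : ∀ i ≤ l, 0 ≤ N i ∧ N i ≤ W)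
    (hNsb : ∀ i ≤ l, 0 ≤ Ns i ∧ Ns i ≤ W)
    (hrec : ∀ i, 1 ≤ i → i ≤ l →
      W - N i ≤ 3 / 4 * (W - N (i - 1)) + 1 / 4 * (W - Ns i))
    (hL : ((5 / 4 : ℝ) - 1) / (5 / 4) *
        (∑ i ∈ Finset.range (l + 1), (5 / 4 : ℝ) ^ i * (W - Ns i)) ≤ L) :
    ∑ i ∈ Finset.range (l + 1), (5 / 4 : ℝ) ^ (i + 2) * (W - N i) ≤ 1000 * L :=
  stmt_9_general W L l N Ns hN0 hNs0 hNb hNsb hrec hL
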